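/- The function F(b) = φ(b)/Φ(−b) − b is strictly decreasing on the interval (0, ∞): for all 0 < a < b one has F(b) < F(a). -/

import Mathlib

open MeasureTheory Filter

/-- Standard normal density. -/
noncomputable def phi (x : ℝ) : ℝ := Real.exp (-x ^ 2 / 2) / Real.sqrt (2 * Real.pi)

/-- Standard normal cumulative distribution function. -/
noncomputable def Phi (x : ℝ) : ℝ := ∫ t in Set.Iio x, phi t

/-- Mills-type ratio. -/
noncomputable def r (b : ℝ) : ℝ := phi b / Phi (-b)

/-- The deficit transformation `F`. -/
noncomputable def F (b : ℝ) : ℝ := phi b / Phi (-b) - b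

/-!
Since `φ' = -xφ` and `(Φ(-x))' = -φ(x)`, the derivative of `F = r - id` is `r² - x r - 1`.
The identity `(t - m)² φ = (-(t - 2m) φ)' + (1 + m²) φ` gives, for `m = r(x)`,
`∫ₓ^∞ (t - r)² φ(t) dt = Φ(-x) (1 + x r - r²)`: up to the factor `Φ(-x)`, `1 + x r - r²` is the
variance of a standard normal conditioned on exceeding `x`, hence positive, and `F' < 0` on `ℝ`.
-/

open Set Topology

lemma phi_pos (x : ℝ) : 0 < phi x := by
  unfold phi; positivity

lemma phi_neg (x : ℝ) : phi (-x) = phi x := by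
  simp [phi]

lemma continuous_phi : Continuous phi := by
  unfold phi; fun_prop

lemma phi_eq_mul_exp (x : ℝ) :
    phi x = (Real.sqrt (2 * Real.pi))⁻¹ * Real.exp (-(1 / 2) * x ^ 2) := by
  rw [phi, div_eq_inv_mul]; ring_nf

lemma hasDerivAt_phi (x : ℝ) : HasDerivAt phi (-x * phi x) x := by
  have h := (((hasDerivAt_pow 2 x).neg.div_const 2).exp).div_const (Real.sqrt (2 * Real.pi))
  refine h.congr_deriv ?_
  simp only [phi, Pi.neg_apply]; ring

lemma integrable_pow_mul_phi (n : ℕ) : Integrable fun t => t ^ n * phi t := by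
  have h := (integrable_rpow_mul_exp_neg_mul_sq (b := 1 / 2) (by norm_num)
    (s := n) (by linarith [n.cast_nonneg (α := ℝ)])).const_mul (Real.sqrt (2 * Real.pi))⁻¹
  refine h.congr (ae_of_all _ fun t => ?_)
  simp only [Real.rpow_natCast, phi_eq_mul_exp]; ring

lemma tendsto_pow_mul_phi_atTop (n : ℕ) : Tendsto (fun t => t ^ n * phi t) atTop (𝓝 0) := by
  have h := ((tendsto_rpow_abs_mul_exp_neg_mul_sq_cocompact (a := 1 / 2) (by norm_num)
    n).mono_left atTop_le_cocompact).const_mul (Real.sqrt (2 * Real.pi))⁻¹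
  rw [mul_zero] at h
  refine h.congr' ?_
  filter_upwards [eventually_ge_atTop 0] with t ht
  simp only [abs_of_nonneg ht, Real.rpow_natCast, phi_eq_mul_exp]; ring

lemma integrable_phi : Integrable phi := by
  simpa using integrable_pow_mul_phi 0

lemma Phi_neg_eq_integral_Ioi (x : ℝ) : Phi (-x) = ∫ t in Ioi x, phi t := by
  rw [Phi, setIntegral_congr_set Iio_ae_eq_Iic, ← integral_comp_neg_Ioi]
  simp only [phi_neg]

lemma Phi_pos (x : ℝ) : 0 < Phi x := by
  rw [Phi, setIntegral_pos_iff_support_of_nonneg_ae (ae_of_all _ fun t => (phi_pos t).le)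
    integrable_phi.integrableOn]
  have : Function.support phi = univ := by
    ext t; simp [(phi_pos t).ne']
  simp [this]

lemma hasDerivAt_Phi (x : ℝ) : HasDerivAt Phi (phi x) x := by
  have hPhi : ∀ u, Phi 0 + ∫ t in (0 : ℝ)..u, phi t = Phi u := fun u => by
    rw [Phi, Phi, setIntegral_congr_set Iio_ae_eq_Iic, setIntegral_congr_set Iio_ae_eq_Iic,
      ← intervalIntegral.integral_Iic_sub_Iic integrable_phi.integrableOn
        integrable_phi.integrableOn]
    ring
  have h : HasDerivAt (fun u => Phi 0 + ∫ t in (0 : ℝ)..u, phi t) (phi x) x :=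
    (intervalIntegral.integral_hasDerivAt_right integrable_phi.intervalIntegrable
      (continuous_phi.stronglyMeasurableAtFilter _ _) continuous_phi.continuousAt).const_add _
  simpa only [hPhi] using h

lemma integrable_sq_sub_mul_phi (m : ℝ) : Integrable fun t => (t - m) ^ 2 * phi t := by
  refine (((integrable_pow_mul_phi 2).sub ((integrable_pow_mul_phi 1).const_mul (2 * m))).add
    ((integrable_pow_mul_phi 0).const_mul (m ^ 2))).congr (ae_of_all _ fun t => ?_)
  simp only [Pi.add_apply, Pi.sub_apply]; ring

lemma integral_Ioi_sq_sub_mul_phi (x m : ℝ) :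
    ∫ t in Ioi x, (t - m) ^ 2 * phi t = (x - 2 * m) * phi x + (1 + m ^ 2) * Phi (-x) := by
  have hderiv : ∀ t, HasDerivAt (fun t => -(t - 2 * m) * phi t)
      ((t - m) ^ 2 * phi t - (1 + m ^ 2) * phi t) t := fun t => by
    refine (((hasDerivAt_id t).sub_const (2 * m)).neg.mul (hasDerivAt_phi t)).congr_deriv ?_
    simp only [id, Pi.neg_apply]; ring
  have hlim : Tendsto (fun t => -(t - 2 * m) * phi t) atTop (𝓝 0) := by
    have h := ((tendsto_pow_mul_phi_atTop 1).sub
      ((tendsto_pow_mul_phi_atTop 0).const_mul (2 * m))).neg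
    simp only [sub_zero, mul_zero, neg_zero] at h
    exact h.congr fun t => by ring
  have hint := (integrable_sq_sub_mul_phi m).sub (integrable_phi.const_mul (1 + m ^ 2))
  have hFTC := integral_Ioi_of_hasDerivAt_of_tendsto' (a := x) (fun t _ => hderiv t)
    hint.integrableOn hlim
  rw [integral_sub (integrable_sq_sub_mul_phi m).integrableOn
    (integrable_phi.const_mul _).integrableOn, integral_const_mul,
    ← Phi_neg_eq_integral_Ioi] at hFTC
  linarith

lemma integral_Ioi_sq_sub_mul_phi_pos (x m : ℝ) : 0 < ∫ t in Ioi x, (t - m) ^ 2 * phi t := by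
  have hcont : Continuous fun t => (t - m) ^ 2 * phi t :=
    ((continuous_id.sub continuous_const).pow 2).mul continuous_phi
  rw [setIntegral_pos_iff_support_of_nonneg_ae
    (ae_of_all _ fun t => mul_nonneg (sq_nonneg _) (phi_pos t).le)
    (integrable_sq_sub_mul_phi m).integrableOn]
  refine (hcont.isOpen_support.inter isOpen_Ioi).measure_pos volume ⟨max x m + 1, ?_, ?_⟩
  · exact mul_ne_zero (pow_ne_zero _ (by linarith [le_max_right x m])) (phi_pos _).ne'
  · simp only [mem_Ioi]; linarith [le_max_left x m]

lemma hasDerivAt_F (x : ℝ) : HasDerivAt F (r x ^ 2 - x * r x - 1) x := by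
  have hPhi : HasDerivAt (fun x => Phi (-x)) (-phi x) x := by
    simpa [phi_neg, Function.comp_def] using (hasDerivAt_Phi (-x)).comp x (hasDerivAt_neg x)
  refine (((hasDerivAt_phi x).div hPhi (Phi_pos (-x)).ne').sub (hasDerivAt_id x)).congr_deriv ?_
  have hP := (Phi_pos (-x)).ne'
  simp only [r]
  field_simp
  ring

lemma sq_r_sub_mul_r_lt_one (x : ℝ) : r x ^ 2 - x * r x < 1 := by
  have hP := Phi_pos (-x)
  have hphi : phi x = r x * Phi (-x) := by rw [r, div_mul_cancel₀ _ hP.ne']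
  have hvar : 0 < Phi (-x) * (1 - (r x ^ 2 - x * r x)) := by
    have h := integral_Ioi_sq_sub_mul_phi_pos x (r x)
    rw [integral_Ioi_sq_sub_mul_phi, hphi] at h
    linarith
  exact sub_pos.1 (pos_of_mul_pos_right hvar hP.le)

lemma deriv_F_neg (x : ℝ) : deriv F x < 0 := by
  rw [(hasDerivAt_F x).deriv]
  linarith [sq_r_sub_mul_r_lt_one x]

theorem F_strictAnti_general (a b : ℝ) (hab : a < b) : F b < F a :=
  strictAnti_of_deriv_neg deriv_F_neg hab

/-- `F` is strictly decreasing on `(0, ∞)`: for `0 < a < b`, `F(b) < F(a)`. -/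
theorem F_strictAnti (a b : ℝ) (ha : 0 < a) (hab : a < b) : F b < F a :=
  F_strictAnti_general a b hab
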